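/- arXiv:2602.20991 — 4 statements merged into one kernel-verified Lean document; each statement's English description precedes it below -/
import Mathlib

section
/- Let h be a positive measurable function on [A, ∞) that is regularly varying of index ρ > 0. Define p(x) = h(x)·exp(-∫₀ˣ h(t) dt). Then for every λ > 1, p(λx)/p(x) < 1 for all sufficiently large x. -/
open MeasureTheory Filter Set

/-!
Write `p (λx) / p x = (h (λx) / h x) · exp (-∫ₓ^{λx} h)`. The first factor tends to `λ^ρ`, so it
suffices that `∫ₓ^{λx} h → ∞`. Since `λ^ρ > 1`, eventually `h t ≤ h (λt)`; substituting `t ↦ λt`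
then gives `I (λx) ≥ λ · I x` for `I x = ∫_{x₀}^x h`, so `I` grows geometrically along `λⁿ x`, and
`∫ₓ^{λx} h = I (λx) - I x ≥ (λ - 1) · I x → ∞`.
-/

theorem tendsto_atTop_of_mul_le_comp_mul {F : ℝ → ℝ} {a b l q : ℝ} (ha : 0 ≤ a) (hab : a ≤ b)
    (hl : 1 ≤ l) (hq : 1 < q) (hmono : MonotoneOn F (Ici a)) (hFb : 0 < F b)
    (hgrow : ∀ x ≥ a, q * F x ≤ F (l * x)) : Tendsto F atTop atTop := by
  have hle_pow : ∀ n : ℕ, b ≤ l ^ n * b := fun n =>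
    le_mul_of_one_le_left (ha.trans hab) (one_le_pow₀ hl)
  have hiter : ∀ n : ℕ, q ^ n * F b ≤ F (l ^ n * b) := by
    intro n
    induction n with
    | zero => simp
    | succ n ih =>
      calc q ^ (n + 1) * F b = q * (q ^ n * F b) := by ring
        _ ≤ q * F (l ^ n * b) := by gcongr
        _ ≤ F (l * (l ^ n * b)) := hgrow _ (hab.trans (hle_pow n))
        _ = F (l ^ (n + 1) * b) := by ring_nf
  refine tendsto_atTop_atTop.2 fun M => ?_
  obtain ⟨n, hn⟩ := pow_unbounded_of_one_lt (M / F b) hq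
  refine ⟨l ^ n * b, fun x hx => ?_⟩
  have hnb : a ≤ l ^ n * b := hab.trans (hle_pow n)
  calc M ≤ q ^ n * F b := ((div_lt_iff₀ hFb).1 hn).le
    _ ≤ F (l ^ n * b) := hiter n
    _ ≤ F x := hmono hnb (hnb.trans hx) hx

section IntervalIntegral

variable {h : ℝ → ℝ} {x₀ l : ℝ}

theorem mul_integral_le_integral_comp_mul
    (hint : ∀ a b : ℝ, IntervalIntegrable h volume a b) (hx₀ : 0 ≤ x₀) (hl : 1 ≤ l)
    (hnonneg : ∀ t ≥ x₀, 0 ≤ h t) (hle : ∀ t ≥ x₀, h t ≤ h (l * t)) {x : ℝ} (hx : x₀ ≤ x) :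
    l * ∫ t in x₀..x, h t ≤ ∫ t in x₀..l * x, h t := by
  have hl0 : l ≠ 0 := (one_pos.trans_le hl).ne'
  have hcomp : IntervalIntegrable (fun t => h (l * t)) volume x₀ x := by
    simpa [mul_div_cancel_left₀ _ hl0] using (hint (l * x₀) (l * x)).comp_mul_left (c := l)
  have hsubst : l * ∫ t in x₀..x, h (l * t) = ∫ t in l * x₀..l * x, h t := by
    rw [intervalIntegral.integral_comp_mul_left h hl0, smul_eq_mul, ← mul_assoc,
      mul_inv_cancel₀ hl0, one_mul]
  have hinit : 0 ≤ ∫ t in x₀..l * x₀, h t :=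
    intervalIntegral.integral_nonneg (le_mul_of_one_le_left hx₀ hl) fun t ht => hnonneg t ht.1
  calc l * ∫ t in x₀..x, h t ≤ l * ∫ t in x₀..x, h (l * t) := by
        gcongr
        exact intervalIntegral.integral_mono_on hx (hint x₀ x) hcomp fun t ht => hle t ht.1
    _ = ∫ t in l * x₀..l * x, h t := hsubst
    _ ≤ (∫ t in x₀..l * x₀, h t) + ∫ t in l * x₀..l * x, h t := le_add_of_nonneg_left hinit
    _ = ∫ t in x₀..l * x, h t :=
        intervalIntegral.integral_add_adjacent_intervals (hint _ _) (hint _ _)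

theorem tendsto_integral_mul_atTop (hint : ∀ a b : ℝ, IntervalIntegrable h volume a b)
    (hl : 1 < l) (hpos : ∀ᶠ t in atTop, 0 < h t) (hle : ∀ᶠ t in atTop, h t ≤ h (l * t)) :
    Tendsto (fun x => ∫ t in x..l * x, h t) atTop atTop := by
  obtain ⟨x₁, hx₁⟩ := eventually_atTop.1 (hpos.and hle)
  set x₀ := max x₁ 0
  have hx₀ : 0 ≤ x₀ := le_max_right _ _
  have hgood : ∀ t ≥ x₀, 0 < h t ∧ h t ≤ h (l * t) := fun t ht =>
    hx₁ t ((le_max_left _ _).trans ht)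
  set I : ℝ → ℝ := fun x => ∫ t in x₀..x, h t
  have hgrow : ∀ x ≥ x₀, l * I x ≤ I (l * x) := fun x hx =>
    mul_integral_le_integral_comp_mul hint hx₀ hl.le (fun t ht => (hgood t ht).1.le)
      (fun t ht => (hgood t ht).2) hx
  have hmono : MonotoneOn I (Ici x₀) := fun a ha b _ hab => by
    simp only [I, ← intervalIntegral.integral_add_adjacent_intervals (hint x₀ a) (hint a b),
      le_add_iff_nonneg_right]
    exact intervalIntegral.integral_nonneg hab fun t ht => (hgood t (le_trans ha ht.1)).1.le
  have hI₁ : 0 < I (x₀ + 1) :=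
    intervalIntegral.intervalIntegral_pos_of_pos_on (hint _ _)
      (fun t ht => (hgood t ht.1.le).1) (by linarith)
  have hI : Tendsto I atTop atTop :=
    tendsto_atTop_of_mul_le_comp_mul hx₀ (by linarith) hl.le hl hmono hI₁ hgrow
  refine tendsto_atTop_mono' atTop ?_ (hI.const_mul_atTop (sub_pos.2 hl))
  filter_upwards [eventually_ge_atTop x₀] with x hx
  have hsplit : I x + ∫ t in x..l * x, h t = I (l * x) :=
    intervalIntegral.integral_add_adjacent_intervals (hint _ _) (hint _ _)
  linarith [hgrow x hx]

end IntervalIntegral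

theorem stmt_4_general
    (A : ℝ) (h : ℝ → ℝ)
    (hpos : ∀ x ≥ A, 0 < h x)
    (hint : ∀ x : ℝ, IntervalIntegrable h volume 0 x)
    (ρ : ℝ) (hρ : 0 < ρ)
    (hRV : ∀ l : ℝ, 0 < l →
      Tendsto (fun x => h (l * x) / h x) atTop (nhds (l ^ ρ)))
    (p : ℝ → ℝ)
    (hp : ∀ x, p x = h x * Real.exp (-∫ t in (0:ℝ)..x, h t)) :
    ∀ l : ℝ, 1 < l → ∀ᶠ x in atTop, p (l * x) / p x < 1 := by
  intro l hl
  have hl0 : 0 < l := one_pos.trans hl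
  have hint' : ∀ a b : ℝ, IntervalIntegrable h volume a b := fun a b => (hint a).symm.trans (hint b)
  have hlρ : 1 < l ^ ρ := Real.one_lt_rpow hl hρ
  have hposEv : ∀ᶠ x in atTop, 0 < h x := eventually_atTop.2 ⟨A, hpos⟩
  have hleEv : ∀ᶠ x in atTop, h x ≤ h (l * x) := by
    filter_upwards [(hRV l hl0).eventually (eventually_gt_nhds hlρ), hposEv] with x hx hhx
    exact ((one_lt_div hhx).1 hx).le
  have hexp : ∀ᶠ x in atTop, l ^ ρ + 1 < Real.exp (∫ t in x..l * x, h t) :=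
    (Real.tendsto_exp_atTop.comp (tendsto_integral_mul_atTop hint' hl hposEv hleEv)).eventually
      (eventually_gt_atTop _)
  filter_upwards [(hRV l hl0).eventually (eventually_lt_nhds (lt_add_one _)), hexp, hposEv]
    with x hratio hexpx hhx
  have hsplit : p (l * x) / p x = h (l * x) / h x / Real.exp (∫ t in x..l * x, h t) := by
    rw [hp, hp, ← intervalIntegral.integral_add_adjacent_intervals (hint x) (hint' x (l * x)),
      neg_add, Real.exp_add, Real.exp_neg (∫ t in x..l * x, h t)]
    field_simp
  rw [hsplit, div_lt_one (Real.exp_pos _)]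
  exact hratio.trans hexpx

/-- If `h` is positive, measurable, regularly varying of index `0 < ρ`,
and `p x = h x · exp(-∫₀ˣ h)`, then for every `λ > 1`, `p(λx)/p(x) < 1` for all
sufficiently large `x`. -/
theorem stmt_4
    (A : ℝ) (h : ℝ → ℝ) (hmeas : Measurable h)
    (hpos : ∀ x ≥ A, 0 < h x)
    (hint : ∀ x : ℝ, IntervalIntegrable h volume 0 x)
    (ρ : ℝ) (hρ : 0 < ρ)
    (hRV : ∀ l : ℝ, 0 < l →
      Tendsto (fun x => h (l * x) / h x) atTop (nhds (l ^ ρ)))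
    (p : ℝ → ℝ)
    (hp : ∀ x, p x = h x * Real.exp (-∫ t in (0:ℝ)..x, h t)) :
    ∀ l : ℝ, 1 < l → ∀ᶠ x in atTop, p (l * x) / p x < 1 :=
  stmt_4_general A h hpos hint ρ hρ hRV p hp
end

section
/- If h is in de Haan's class Γ with positive auxiliary function a satisfying a(x) = o(x), and h is monotone increasing on [A, ∞), then for every m > 0, h(x)/x^m → ∞ as x → ∞; that is, h grows faster than any polynomial. -/
open Filter Set

/-- If `h ∈ Γ` with positive auxiliary `a` satisfying `a(x) = o(x)`, and
`h` is monotone increasing on `[A,∞)`, then for every `m > 0`, `h(x)/x^m → ∞`. -/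
theorem stmt_6
    (A : ℝ) (h a : ℝ → ℝ)
    (hpos : ∀ x ≥ A, 0 < h x) (hapos : ∀ x, 0 < a x)
    (hmono : MonotoneOn h (Set.Ici A))
    (hsmall : Tendsto (fun x => a x / x) atTop (nhds 0))
    (hGamma : ∀ t : ℝ,
      Tendsto (fun x => h (x + t * a x) / h x) atTop (nhds (Real.exp t))) :
    ∀ m : ℝ, 0 < m → Tendsto (fun x => h x / x ^ m) atTop atTop := by
  intro m hm
  set D : ℝ := (2 : ℝ) ^ (1 / m) with hD
  have hDm : D ^ m = 2 := by
    rw [hD, ← Real.rpow_mul (by norm_num : (0:ℝ) ≤ 2), one_div,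
      inv_mul_cancel₀ hm.ne', Real.rpow_one]
  have hDpos : 0 < D := Real.rpow_pos_of_pos (by norm_num) _
  have hD1 : 1 < D := by
    by_contra hle
    push_neg at hle
    have : D ^ m ≤ 1 := Real.rpow_le_one hDpos.le hle hm.le
    rw [hDm] at this; linarith
  -- eventual properties
  have hE1 : ∀ᶠ x in atTop, 5/2 ≤ h (x + 1 * a x) / h x := by
    refine (hGamma 1).eventually (eventually_ge_nhds ?_)
    have := Real.exp_one_gt_d9
    linarith
  have hE2 : ∀ᶠ x in atTop, a x / x ≤ D - 1 :=
    hsmall.eventually (eventually_le_nhds (by linarith))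
  obtain ⟨x₀, hx₀⟩ := eventually_atTop.1
    ((hE1.and hE2).and (eventually_ge_atTop (max A 1)))
  have hx₀A : A ≤ x₀ := le_trans (le_max_left _ _) ((hx₀ x₀ le_rfl).2)
  have hx₀1 : (1:ℝ) ≤ x₀ := le_trans (le_max_right _ _) ((hx₀ x₀ le_rfl).2)
  -- the iteration sequence
  set s : ℕ → ℝ := fun k => (fun y => y + a y)^[k] x₀ with hs
  have hsucc : ∀ k, s (k + 1) = s k + a (s k) := by
    intro k
    simp [hs, Function.iterate_succ_apply']
  have hsge : ∀ k, x₀ ≤ s k := by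
    intro k
    induction k with
    | zero => simp [hs]
    | succ n ih =>
      rw [hsucc]
      have := hapos (s n)
      linarith
  have hsA : ∀ k, A ≤ s k := fun k => le_trans hx₀A (hsge k)
  have hsmonoS : StrictMono s := strictMono_nat_of_lt_succ (fun n => by
    rw [hsucc]; have := hapos (s n); linarith)
  have hstep : ∀ k, 5/2 * h (s k) ≤ h (s (k + 1)) := by
    intro k
    have h1 := ((hx₀ (s k) (hsge k)).1).1
    have hp := hpos (s k) (hsA k)
    rw [le_div_iff₀ hp] at h1
    rw [hsucc]
    simpa using h1
  have hgrow : ∀ k, (5/2 : ℝ) ^ k * h x₀ ≤ h (s k) := by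
    intro k
    induction k with
    | zero => simp [hs]
    | succ n ih =>
      have := hstep n
      have hp := hpos x₀ hx₀A
      calc (5/2:ℝ) ^ (n+1) * h x₀ = 5/2 * ((5/2:ℝ)^n * h x₀) := by ring
        _ ≤ 5/2 * h (s n) := by nlinarith
        _ ≤ h (s (n+1)) := this
  have hbd : ∀ k, s k ≤ D ^ k * x₀ := by
    intro k
    induction k with
    | zero => simp [hs]
    | succ n ih =>
      have h2 := ((hx₀ (s n) (hsge n)).1).2
      have hspos : 0 < s n := lt_of_lt_of_le (by linarith) (hsge n)
      have ha : a (s n) ≤ (D - 1) * s n := by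
        rw [div_le_iff₀ hspos] at h2; linarith
      calc s (n+1) = s n + a (s n) := hsucc n
        _ ≤ s n + (D - 1) * s n := by linarith
        _ = D * s n := by ring
        _ ≤ D * (D ^ n * x₀) := by nlinarith
        _ = D ^ (n+1) * x₀ := by ring
  -- the sequence is unbounded
  have hub : ∀ L : ℝ, ∃ k, L < s k := by
    intro L
    by_contra hc
    push_neg at hc
    have hLA : A ≤ L := le_trans (hsA 0) (hc 0)
    have hbound : ∀ k, h (s k) ≤ h L := fun k =>
      hmono (hsA k) hLA (hc k)
    have hp := hpos x₀ hx₀A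
    have : Tendsto (fun k : ℕ => (5/2:ℝ)^k * h x₀) atTop atTop :=
      (tendsto_pow_atTop_atTop_of_one_lt (by norm_num : (1:ℝ) < 5/2)).atTop_mul_const hp
    obtain ⟨k, hk⟩ := (this.eventually_gt_atTop (h L)).exists
    have := le_trans (hgrow k) (hbound k)
    linarith
  -- main estimate
  rw [tendsto_atTop]
  intro C
  have hx₀pos : (0:ℝ) < x₀ := by linarith
  have hx0m : 0 < x₀ ^ m := Real.rpow_pos_of_pos hx₀pos m
  set c : ℝ := h x₀ / (2 * x₀ ^ m) with hc
  have hcpos : 0 < c := div_pos (hpos x₀ hx₀A) (by positivity)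
  have htend : Tendsto (fun k : ℕ => (5/4:ℝ)^k * c) atTop atTop :=
    (tendsto_pow_atTop_atTop_of_one_lt (by norm_num : (1:ℝ) < 5/4)).atTop_mul_const hcpos
  obtain ⟨K, hK⟩ := eventually_atTop.1 (htend.eventually_ge_atTop C)
  filter_upwards [eventually_ge_atTop (s K), eventually_ge_atTop x₀] with y hyK hy0
  have hex : ∃ n, y < s n := hub y
  have hn0 : Nat.find hex ≠ 0 := by
    intro h0
    have := Nat.find_spec hex
    rw [h0] at this
    simp only [hs, Function.iterate_zero, id] at this
    linarith
  obtain ⟨k, hkn⟩ := Nat.exists_eq_succ_of_ne_zero hn0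
  have hk1 : s k ≤ y := by
    have := Nat.find_min hex (by omega : k < Nat.find hex)
    push_neg at this
    exact this
  have hk2 : y < s (k + 1) := by
    have := Nat.find_spec hex
    rwa [hkn] at this
  have hkK : K ≤ k := by
    by_contra hlt
    push_neg at hlt
    have : s (k + 1) ≤ s K := hsmonoS.monotone (by omega)
    linarith
  -- numerator bound
  have hnum : (5/2:ℝ)^k * h x₀ ≤ h y :=
    le_trans (hgrow k) (hmono (hsA k) (le_trans hx₀A hy0) hk1)
  -- denominator bound
  have hy1 : (1:ℝ) ≤ y := le_trans hx₀1 hy0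
  have hypos : (0:ℝ) < y := by linarith
  have hden : y ^ m ≤ 2 ^ (k+1) * x₀ ^ m := by
    have h1 : y ^ m ≤ (D ^ (k+1) * x₀) ^ m :=
      Real.rpow_le_rpow hypos.le (le_trans hk2.le (hbd (k+1))) hm.le
    have h2 : (D ^ (k+1) * x₀) ^ m = (D ^ (k+1):ℝ) ^ m * x₀ ^ m :=
      Real.mul_rpow (by positivity) hx₀pos.le
    have h3 : (D ^ (k+1) : ℝ) ^ m = 2 ^ (k+1) := by
      rw [← Real.rpow_natCast D (k+1), ← Real.rpow_mul hDpos.le, hD,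
        ← Real.rpow_mul (by norm_num : (0:ℝ) ≤ 2),
        ← Real.rpow_natCast (2:ℝ) (k+1)]
      congr 1
      field_simp
    rw [h2, h3] at h1
    exact h1
  have hym : 0 < y ^ m := Real.rpow_pos_of_pos hypos m
  have hmain : (5/2:ℝ)^k * h x₀ / (2 ^ (k+1) * x₀ ^ m) ≤ h y / y ^ m :=
    div_le_div₀ (hpos y (le_trans hx₀A hy0)).le hnum hym hden
  have heq : (5/2:ℝ)^k * h x₀ / (2 ^ (k+1) * x₀ ^ m) = (5/4:ℝ)^k * c := by
    rw [hc]
    have h54 : (5/4:ℝ)^k = (5/2:ℝ)^k / 2^k := by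
      rw [← div_pow]; norm_num
    rw [h54]
    have h2k : ((2:ℝ)^k) ≠ 0 := by positivity
    field_simp
    ring_nf
  rw [heq] at hmain
  exact le_trans (hK k hkK) hmain
end

section
/- Let G : [0,∞) → (0,∞) be decreasing with G(u) ≤ G(v)(u/v)^{-c} for u ≥ v ≥ x₀ where c > 1. Let (xₖ) be a strictly increasing sequence minimizing J[x] = Σ_{k≥1} xₖ(G(xₖ) + G(x_{k-1})) over strictly increasing sequences starting at x₀ = 0 with xₖ → ∞. Then there exists M > 1 such that x_{k+1} ≤ M·xₖ for all sufficiently large k. In fact one may take M = 3/(2r^{-1} − 1) with r = 2^{1/c}. -/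
open Filter Set

/-- If `G` is positive and decreasing with the power-law decay bound
`G u ≤ G v (u/v)^{-c}` (`c > 1`) for `u ≥ v ≥ x₀`, and `(xₖ)` minimizes the
linear-search objective `J[x] = Σ xₖ₊₁(G(xₖ₊₁)+G(xₖ))` over strictly increasing
sequences starting at `0` tending to `∞`, then with `r = 2^{1/c}` and
`M = 3/(2r⁻¹ − 1)` we have `M > 1` and `x_{k+1} ≤ M·xₖ` for all large `k`. -/
theorem stmt_9
    (G : ℝ → ℝ) (hGpos : ∀ x ≥ 0, 0 < G x)
    (hGanti : AntitoneOn G (Set.Ici (0:ℝ)))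
    (c x₀ : ℝ) (hc : 1 < c) (hx₀ : 0 < x₀)
    (hdecay : ∀ u v : ℝ, x₀ ≤ v → v ≤ u → G u ≤ G v * (u / v) ^ (-c))
    (x : ℕ → ℝ) (hx0 : x 0 = 0) (hmono : StrictMono x)
    (hinf : Tendsto x atTop atTop)
    (hsum : Summable (fun k => x (k + 1) * (G (x (k + 1)) + G (x k))))
    (hopt : ∀ y : ℕ → ℝ, y 0 = 0 → StrictMono y → Tendsto y atTop atTop →
      Summable (fun k => y (k + 1) * (G (y (k + 1)) + G (y k))) →
      (∑' k, x (k + 1) * (G (x (k + 1)) + G (x k))) ≤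
        ∑' k, y (k + 1) * (G (y (k + 1)) + G (y k))) :
    1 < 3 / (2 / (2:ℝ) ^ (1/c) - 1) ∧
      ∀ᶠ k in atTop, x (k + 1) ≤ (3 / (2 / (2:ℝ) ^ (1/c) - 1)) * x k := by
  have hcpos : (0:ℝ) < c := lt_trans one_pos hc
  set r : ℝ := (2:ℝ) ^ (1/c) with hrdef
  have hr1 : 1 < r := by
    have h := Real.rpow_lt_rpow_of_exponent_lt (show (1:ℝ) < 2 by norm_num)
      (show (0:ℝ) < 1/c by positivity)
    rw [hrdef, one_div]
    simpa using h
  have hr2 : r < 2 := by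
    have h := Real.rpow_lt_rpow_of_exponent_lt (show (1:ℝ) < 2 by norm_num)
      (show 1/c < (1:ℝ) by rw [div_lt_one hcpos]; exact hc)
    rw [hrdef, one_div]
    simpa using h
  have hrpos : (0:ℝ) < r := lt_trans one_pos hr1
  have hd : 0 < 2 / r - 1 := by
    have : 1 < 2 / r := (one_lt_div hrpos).2 hr2
    linarith
  have hd1 : 2 / r - 1 < 1 := by
    have : 2 / r < 2 := by rw [div_lt_iff₀ hrpos]; nlinarith
    linarith
  have hM3 : 3 < 3 / (2 / r - 1) := by
    rw [lt_div_iff₀ hd]; nlinarith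
  have h3r : 3 * r ≤ 3 / (2 / r - 1) := by
    rw [le_div_iff₀ hd]
    have : 3 * r * (2 / r) = 6 := by field_simp; ring
    nlinarith
  refine ⟨by linarith, ?_⟩
  have hrc : r ^ (-c) = 1/2 := by
    rw [hrdef, ← Real.rpow_mul (by norm_num : (0:ℝ) ≤ 2)]
    have e : 1/c * (-c) = -1 := by field_simp
    rw [e, Real.rpow_neg_one]
    norm_num
  filter_upwards [hinf.eventually_ge_atTop x₀] with k hk
  have hxk : 0 < x k := lt_of_lt_of_le hx₀ hk
  by_cases hcase : x (k+1) ≤ r * x k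
  · calc x (k+1) ≤ r * x k := hcase
      _ ≤ 3 / (2 / r - 1) * x k := by nlinarith
  push_neg at hcase
  set t := r * x k with htdef
  have htpos : 0 < t := by positivity
  have hxkt : x k < t := by nlinarith
  set y : ℕ → ℝ := fun j => if j ≤ k then x j else if j = k+1 then t else x (j-1)
    with hydef
  have hyle : ∀ j, j ≤ k → y j = x j := by
    intro j hj; simp [hydef, hj]
  have hyk1 : y (k+1) = t := by
    simp [hydef]
  have hyge : ∀ j, k + 2 ≤ j → y j = x (j-1) := by
    intro j hj
    have h1 : ¬ j ≤ k := by omega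
    have h2 : j ≠ k + 1 := by omega
    simp [hydef, h1, h2]
  have hy0 : y 0 = 0 := by rw [hyle 0 (Nat.zero_le k), hx0]
  have hymono : StrictMono y := by
    apply strictMono_nat_of_lt_succ
    intro j
    by_cases h1 : j + 1 ≤ k
    · rw [hyle j (by omega), hyle _ h1]; exact hmono (by omega)
    by_cases h2 : j = k
    · subst h2; rw [hyle j le_rfl, hyk1]; exact hxkt
    by_cases h3 : j = k + 1
    · subst h3
      rw [hyk1, hyge (k+2) le_rfl]
      simpa using hcase
    · have hj : k + 2 ≤ j := by omega
      rw [hyge j hj, hyge (j+1) (by omega)]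
      exact hmono (by omega)
  have hytend : Tendsto y atTop atTop := by
    have h1 : Tendsto (fun j : ℕ => x (j - 1)) atTop atTop :=
      hinf.comp (tendsto_sub_atTop_nat 1)
    refine Tendsto.congr' ?_ h1
    filter_upwards [eventually_ge_atTop (k+2)] with j hj
    exact (hyge j hj).symm
  set f : ℕ → ℝ := fun j => x (j + 1) * (G (x (j + 1)) + G (x j)) with hfdef
  set h : ℕ → ℝ := fun j => y (j + 1) * (G (y (j + 1)) + G (y j)) with hhdef
  have hshift : ∀ j : ℕ, h (j + (k + 2)) = f (j + (k + 1)) := by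
    intro j
    have e1 : y (j + (k + 2) + 1) = x (j + (k + 1) + 1) := by
      rw [hyge _ (by omega)]; congr 1 <;> omega
    have e2 : y (j + (k + 2)) = x (j + (k + 1)) := by
      rw [hyge _ (by omega)]; congr 1 <;> omega
    simp only [hhdef, hfdef, e1, e2]
  have hhsum : Summable h := by
    rw [← summable_nat_add_iff (k+2)]
    exact (Summable.congr ((summable_nat_add_iff (k+1)).2 hsum) (fun j => (hshift j).symm))
  have hle : ∑' j, f j ≤ ∑' j, h j := hopt y hy0 hymono hytend hhsum
  have hsplitf : ∑' j, f j =
      (∑ j ∈ Finset.range k, f j) + f k + ∑' j, f (j + (k + 1)) := by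
    rw [← Summable.sum_add_tsum_nat_add (k+1) hsum, Finset.sum_range_succ]
  have hsplith : ∑' j, h j =
      ((∑ j ∈ Finset.range k, f j) + h k + h (k+1)) + ∑' j, f (j + (k + 1)) := by
    rw [← Summable.sum_add_tsum_nat_add (k+2) hhsum, Finset.sum_range_succ,
      Finset.sum_range_succ]
    congr 1
    · congr 2
      apply Finset.sum_congr rfl
      intro j hj
      have hj' : j < k := Finset.mem_range.1 hj
      simp only [hhdef, hfdef, hyle (j+1) (by omega), hyle j (by omega)]
    · exact tsum_congr hshift
  have hkey : f k ≤ h k + h (k+1) := by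
    rw [hsplitf, hsplith] at hle
    linarith
  have hfk : f k = x (k+1) * (G (x (k+1)) + G (x k)) := rfl
  have hhk : h k = t * (G t + G (x k)) := by
    simp only [hhdef, hyk1, hyle k le_rfl]
  have hhk1 : h (k+1) = x (k+1) * (G (x (k+1)) + G t) := by
    have e1 : y (k+1+1) = x (k+1) := by rw [hyge _ le_rfl]; congr 1 <;> omega
    simp only [hhdef, e1, hyk1]
  rw [hfk, hhk, hhk1] at hkey
  have hGt : G t ≤ G (x k) / 2 := by
    have hdec := hdecay t (x k) hk hxkt.le
    have e : t / x k = r := by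
      rw [htdef, mul_div_assoc, div_self (ne_of_gt hxk), mul_one]
    rw [e, hrc] at hdec
    linarith
  have hGxk : 0 < G (x k) := hGpos _ hxk.le
  have hGtpos : 0 < G t := hGpos _ htpos.le
  have hx1pos : 0 < x (k+1) := lt_trans htpos hcase
  have hfinal : x (k+1) ≤ 3 * t := by
    nlinarith [hkey, hGt, hGxk, hGtpos, htpos, hx1pos]
  calc x (k+1) ≤ 3 * t := hfinal
    _ = (3 * r) * x k := by rw [htdef]; ring
    _ ≤ 3 / (2 / r - 1) * x k := mul_le_mul_of_nonneg_right h3r hxk.le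
end

section
/- Let p > 0 be a continuous symmetric probability density on (-1,1) with p(x) → 0 as x → 1⁻, monotone decreasing on [A, 1) for some A ∈ (0,1). Then any optimal sequence of turning points (xₖ) for the linear search problem does not terminate: xₖ < 1 for all k. -/
/-!
Suppose an optimal sequence reaches 1, first at index `n + 1`, and let `c = x n < 1`. Lowering
the turning point `x (n + 1)` from `1` to any `t ∈ [c, 1)`, with all later points still at `1`,
changes the cost by `(1 + t) G(t) - (1 - t) G(c)`, so optimality forces
`G(c) ≤ (1 + t) · G(t) / (1 - t)`. Here `G(t) / (1 - t)` is the mean of `p` over `(t, 1)`, which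
tends to `0` as `t → 1⁻`; hence `G(c) ≤ 0`, contradicting `p > 0` on `(c, 1)`.
-/

open MeasureTheory Filter Set intervalIntegral

open scoped Topology

lemma intervalIntegrable_of_continuousOn_Ioo_of_tendsto {E : Type*} [NormedAddCommGroup E]
    {f : ℝ → E} {a b c : ℝ} {L : E}
    (hf : ContinuousOn f (Ioo a b)) (hlim : Tendsto f (𝓝[<] b) (𝓝 L)) (hc : c ∈ Ioo a b) :
    IntervalIntegrable f volume c b := by
  obtain ⟨l, hlb, hbdd⟩ := mem_nhdsLT_iff_exists_Ioo_subset.mp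
    (hlim.eventually (Metric.closedBall_mem_nhds L one_pos))
  set d := max l c
  have hdb : d < b := max_lt hlb hc.2
  have hcd : IntervalIntegrable f volume c d :=
    (hf.mono fun s hs => by
      rw [uIcc_of_le (le_max_right l c)] at hs
      exact ⟨hc.1.trans_le hs.1, hs.2.trans_lt hdb⟩).intervalIntegrable
  have hdb' : IntervalIntegrable f volume d b := by
    rw [intervalIntegrable_iff_integrableOn_Ioo_of_le hdb.le]
    refine ⟨(hf.mono fun s hs => ⟨hc.1.trans_le ((le_max_right l c).trans hs.1.le), hs.2⟩)
      |>.aestronglyMeasurable measurableSet_Ioo, ?_⟩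
    refine HasFiniteIntegral.restrict_of_bounded (C := ‖L‖ + 1) (by simp [Real.volume_Ioo]) ?_
    filter_upwards [ae_restrict_mem measurableSet_Ioo] with s hs
    have hfs : dist (f s) L ≤ 1 := hbdd ⟨(le_max_left l c).trans_lt hs.1, hs.2⟩
    rw [dist_eq_norm] at hfs
    linarith [norm_le_norm_add_norm_sub' (f s) L]
  exact hcd.trans hdb'

lemma tendsto_integral_div_sub_nhdsLT {f : ℝ → ℝ} {b : ℝ}
    (hlim : Tendsto f (𝓝[<] b) (𝓝 0)) :
    Tendsto (fun t => (∫ s in t..b, f s) / (b - t)) (𝓝[<] b) (𝓝 0) := by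
  refine Metric.tendsto_nhds.mpr fun ε hε => ?_
  obtain ⟨l, hlb, hsmall⟩ := mem_nhdsLT_iff_exists_Ioo_subset.mp
    (hlim.eventually (Metric.closedBall_mem_nhds 0 (half_pos hε)))
  filter_upwards [Ioo_mem_nhdsLT hlb] with t ht
  have hbt : 0 < b - t := sub_pos.mpr ht.2
  have hint : ‖∫ s in t..b, f s‖ ≤ ε / 2 * |b - t| := by
    refine norm_integral_le_of_norm_le_const_ae ?_
    filter_upwards [volume.ae_ne b] with s hsb hs
    rw [uIoc_of_le ht.2.le] at hs
    simpa using hsmall ⟨ht.1.trans hs.1, lt_of_le_of_ne hs.2 hsb⟩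
  rw [abs_of_pos hbt] at hint
  rw [dist_zero_right, norm_div, Real.norm_of_nonneg hbt.le, div_lt_iff₀ hbt]
  exact hint.trans_lt (mul_lt_mul_of_pos_right (half_lt_self hε) hbt)

def searchCostTerm (G : ℝ → ℝ) (x : ℕ → ℝ) (k : ℕ) : ℝ :=
  x (k + 1) * (G (x (k + 1)) + G (x k))

structure IsAdmissible (G : ℝ → ℝ) (x : ℕ → ℝ) : Prop where
  zero : x 0 = 0
  mono : Monotone x
  mem_Icc : ∀ k, x k ∈ Icc (0 : ℝ) 1
  summable : Summable (searchCostTerm G x)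

lemma Monotone.update_succ {α : Type*} [Preorder α] {x : ℕ → α} (hx : Monotone x) {n : ℕ}
    {t : α} (h₁ : x n ≤ t) (h₂ : t ≤ x (n + 2)) :
    Monotone (Function.update x (n + 1) t) := by
  refine monotone_nat_of_le_succ fun k => ?_
  rcases eq_or_ne k n with rfl | hkn
  · simpa using h₁
  rcases eq_or_ne k (n + 1) with rfl | hkn'
  · simpa using h₂
  rw [Function.update_of_ne hkn', Function.update_of_ne (by omega)]
  exact hx k.le_succ

lemma hasSum_add_sum_sub_of_eq_off_finset {ι α : Type*} [AddCommGroup α] [TopologicalSpace α]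
    [ContinuousAdd α] {f g : ι → α} {a : α} (hf : HasSum f a) (s : Finset ι)
    (hfg : ∀ k ∉ s, g k = f k) : HasSum g (a + ∑ k ∈ s, (g k - f k)) := by
  simpa using hf.add (hasSum_sum_of_ne_finset_zero (f := fun k => g k - f k)
    fun k hk => sub_eq_zero.mpr (hfg k hk))

lemma hasSum_searchCostTerm_update {G : ℝ → ℝ} (hG : G 1 = 0) {x : ℕ → ℝ} {a : ℝ}
    (hx : HasSum (searchCostTerm G x) a) {n : ℕ} (h₁ : x (n + 1) = 1) (h₂ : x (n + 2) = 1)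
    (t : ℝ) :
    HasSum (searchCostTerm G (Function.update x (n + 1) t))
      (a + ((1 + t) * G t - (1 - t) * G (x n))) := by
  have hdiff : ∑ k ∈ {n, n + 1},
      (searchCostTerm G (Function.update x (n + 1) t) k - searchCostTerm G x k) =
        (1 + t) * G t - (1 - t) * G (x n) := by
    rw [Finset.sum_pair n.succ_ne_self.symm]
    simp only [searchCostTerm, Function.update_self, Function.update_of_ne n.succ_ne_self.symm,
      Function.update_of_ne (n + 1).succ_ne_self, h₁, h₂, hG]
    ring
  rw [← hdiff]
  refine hasSum_add_sum_sub_of_eq_off_finset hx _ fun k hk => ?_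
  simp only [Finset.mem_insert, Finset.mem_singleton, not_or] at hk
  simp [searchCostTerm, Function.update_of_ne (by omega : k + 1 ≠ n + 1),
    Function.update_of_ne hk.2]

def IsOptimal (G : ℝ → ℝ) (x : ℕ → ℝ) : Prop :=
  IsAdmissible G x ∧
    ∀ y, IsAdmissible G y → ∑' k, searchCostTerm G x k ≤ ∑' k, searchCostTerm G y k

lemma IsAdmissible.exists_lt_one_and_succ_eq_one {G : ℝ → ℝ} {x : ℕ → ℝ}
    (hx : IsAdmissible G x) {k : ℕ} (hk : x k = 1) : ∃ n, x n < 1 ∧ x (n + 1) = 1 := by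
  induction k with
  | zero => simp [hx.zero] at hk
  | succ k ih =>
    rcases (hx.mem_Icc k).2.lt_or_eq with hlt | heq
    · exact ⟨k, hlt, hk⟩
    · exact ih heq

lemma IsOptimal.one_sub_mul_le_one_add_mul {G : ℝ → ℝ} (hG : G 1 = 0) {x : ℕ → ℝ}
    (hx : IsOptimal G x) {n : ℕ} (h₁ : x (n + 1) = 1) {t : ℝ} (ht : t ∈ Icc (x n) 1) :
    (1 - t) * G (x n) ≤ (1 + t) * G t := by
  obtain ⟨hadm, hmin⟩ := hx
  have h₂ : x (n + 2) = 1 := le_antisymm (hadm.mem_Icc _).2 (h₁ ▸ hadm.mono (n + 1).le_succ)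
  have hsum := hasSum_searchCostTerm_update hG hadm.summable.hasSum h₁ h₂ t
  have hy : IsAdmissible G (Function.update x (n + 1) t) :=
    { zero := by rw [Function.update_of_ne n.succ_ne_zero.symm, hadm.zero]
      mono := hadm.mono.update_succ ht.1 (h₂ ▸ ht.2)
      mem_Icc := fun k => by
        rcases eq_or_ne k (n + 1) with rfl | hk
        · rw [Function.update_self]
          exact ⟨(hadm.mem_Icc n).1.trans ht.1, ht.2⟩
        · rw [Function.update_of_ne hk]
          exact hadm.mem_Icc k
      summable := hsum.summable }
  have := hmin _ hy
  rw [hsum.tsum_eq] at this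
  linarith

theorem stmt_15_general
    (p : ℝ → ℝ)
    (hcont : ContinuousOn p (Set.Ioo (-1:ℝ) 1))
    (hpos : ∀ x ∈ Set.Ioo (-1:ℝ) 1, 0 < p x)
    (hlim : Tendsto p (nhdsWithin 1 (Set.Iio 1)) (nhds 0))
    (G : ℝ → ℝ) (hG : ∀ x, G x = ∫ t in x..(1:ℝ), p t)
    (x : ℕ → ℝ) (hx0 : x 0 = 0) (hmono : Monotone x)
    (hrange : ∀ k, x k ∈ Set.Icc (0:ℝ) 1)
    (hsum : Summable (fun k => x (k + 1) * (G (x (k + 1)) + G (x k))))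
    (hopt : ∀ y : ℕ → ℝ, y 0 = 0 → Monotone y → (∀ k, y k ∈ Set.Icc (0:ℝ) 1) →
      Summable (fun k => y (k + 1) * (G (y (k + 1)) + G (y k))) →
      (∑' k, x (k + 1) * (G (x (k + 1)) + G (x k))) ≤
        ∑' k, y (k + 1) * (G (y (k + 1)) + G (y k))) :
    ∀ k, x k < 1 := by
  have hx : IsOptimal G x :=
    ⟨⟨hx0, hmono, hrange, hsum⟩, fun y hy => hopt y hy.zero hy.mono hy.mem_Icc hy.summable⟩
  obtain rfl : G = fun a => ∫ t in a..1, p t := funext hG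
  by_contra! ⟨k, hk⟩
  obtain ⟨n, hn, hn₁⟩ := hx.1.exists_lt_one_and_succ_eq_one (le_antisymm (hrange k).2 hk)
  have hn₀ := (hrange n).1
  have hpos_integral : 0 < ∫ t in x n..1, p t :=
    intervalIntegral_pos_of_pos_on
      (intervalIntegrable_of_continuousOn_Ioo_of_tendsto hcont hlim ⟨by linarith, hn⟩)
      (fun s hs => hpos s ⟨by linarith [hs.1], hs.2⟩) hn
  have hbound : ∀ᶠ t in 𝓝[<] 1,
      ∫ s in x n..1, p s ≤ (1 + t) * ((∫ s in t..1, p s) / (1 - t)) := by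
    filter_upwards [Ioo_mem_nhdsLT hn] with t ht
    rw [mul_div_assoc', le_div_iff₀ (sub_pos.2 ht.2), mul_comm]
    exact hx.one_sub_mul_le_one_add_mul (by simp) hn₁ ⟨ht.1.le, ht.2.le⟩
  have hbound_lim : Tendsto (fun t => (1 + t) * ((∫ s in t..1, p s) / (1 - t))) (𝓝[<] 1)
      (𝓝 ((1 + 1) * 0)) :=
    ((tendsto_const_nhds.add tendsto_id).mono_left nhdsWithin_le_nhds).mul
      (tendsto_integral_div_sub_nhdsLT hlim)
  linarith [ge_of_tendsto hbound_lim hbound]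

/-- For a continuous symmetric density `p > 0` on `(-1,1)` with
`p(x) → 0` as `x → 1⁻` and `p` monotone decreasing on `[A,1)`, any optimal sequence
of turning points for the linear search problem does not terminate: `xₖ < 1` for
all `k`. -/
theorem stmt_15
    (p : ℝ → ℝ)
    (hcont : ContinuousOn p (Set.Ioo (-1:ℝ) 1))
    (hpos : ∀ x ∈ Set.Ioo (-1:ℝ) 1, 0 < p x)
    (hsymm : ∀ x, p (-x) = p x)
    (hprob : ∫ t in (-1:ℝ)..1, p t = 1)
    (hlim : Tendsto p (nhdsWithin 1 (Set.Iio 1)) (nhds 0))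
    (A : ℝ) (hA : A ∈ Set.Ioo (0:ℝ) 1)
    (hanti : AntitoneOn p (Set.Ico A 1))
    (G : ℝ → ℝ) (hG : ∀ x, G x = ∫ t in x..(1:ℝ), p t)
    (x : ℕ → ℝ) (hx0 : x 0 = 0) (hmono : Monotone x)
    (hrange : ∀ k, x k ∈ Set.Icc (0:ℝ) 1)
    (hsum : Summable (fun k => x (k + 1) * (G (x (k + 1)) + G (x k))))
    (hopt : ∀ y : ℕ → ℝ, y 0 = 0 → Monotone y → (∀ k, y k ∈ Set.Icc (0:ℝ) 1) →
      Summable (fun k => y (k + 1) * (G (y (k + 1)) + G (y k))) →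
      (∑' k, x (k + 1) * (G (x (k + 1)) + G (x k))) ≤
        ∑' k, y (k + 1) * (G (y (k + 1)) + G (y k))) :
    ∀ k, x k < 1 :=
  stmt_15_general p hcont hpos hlim G hG x hx0 hmono hrange hsum hopt
end
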